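/- Quantile tail identity: Let ν be a Borel probability measure on ℝ with finite first moment, let τ ∈ (0,1), and set c* := QF_ν(1 − τ). Then ∫ (g − c*)_+ dν(g) = ∫_{1−τ}^{1} QF_ν(t) dt − τ·c*, where x_+ := max{x, 0}. -/

import Mathlib

/-!
For `t ∈ (0,1)` the quantile function is a generalised inverse of the distribution
function `F` of `ν`: `QF ν t ≤ x ↔ t ≤ F x`. Hence `QF ν` pushes Lebesgue measure on `(0,1)`
forward to `ν`, so `∫ (g - c*)₊ dν(g) = ∫₀¹ (QF ν t - c*)₊ dt`. As `QF ν` is monotone and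
`c* = QF ν (1 - τ)`, the integrand vanishes for `t ≤ 1 - τ` and equals `QF ν t - c*` beyond.
-/

open MeasureTheory

noncomputable section

/-- The quantile function of a Borel probability measure on ℝ:
`QF ν t = inf { x | ν((-∞, x]) ≥ t }`. -/
def QF (ν : Measure ℝ) (t : ℝ) : ℝ :=
  sInf { x : ℝ | t ≤ (ν (Set.Iic x)).toReal }

open ProbabilityTheory Set Filter Topology

lemma setIntegral_max_sub_zero_of_monotoneOn {f : ℝ → ℝ} {a b s : ℝ}
    (hf : MonotoneOn f (Ioo a b)) (hint : IntegrableOn f (Ioo a b)) (hs : s ∈ Ioo a b) :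
    ∫ t in Ioo a b, max (f t - f s) 0 = (∫ t in s..b, f t) - (b - s) * f s := by
  have h_indicator : ∀ t ∈ Ioo a b,
      max (f t - f s) 0 = (Ioi s).indicator (fun t => f t - f s) t := by
    intro t ht
    rcases le_or_gt t s with hts | hst
    · simp [hts, hf ht hs hts]
    · simp [indicator_of_mem (mem_Ioi.mpr hst), hf hs ht hst.le]
  have hint_s : IntegrableOn f (Ioo s b) := hint.mono_set (Ioo_subset_Ioo_left hs.1.le)
  rw [setIntegral_congr_fun measurableSet_Ioo h_indicator,
    setIntegral_indicator measurableSet_Ioi, Ioo_inter_Ioi, max_eq_right hs.1.le,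
    integral_sub hint_s (integrableOn_const measure_Ioo_lt_top.ne), setIntegral_const,
    Real.volume_real_Ioo_of_le hs.2.le, smul_eq_mul,
    intervalIntegral.integral_of_le hs.2.le, integral_Ioc_eq_integral_Ioo]

section Quantile

lemma nonempty_setOf_le_cdf (ν : Measure ℝ) {t : ℝ} (ht : t < 1) :
    {x | t ≤ cdf ν x}.Nonempty :=
  ((tendsto_cdf_atTop ν).eventually (eventually_ge_nhds ht)).exists

lemma bddBelow_setOf_le_cdf (ν : Measure ℝ) {t : ℝ} (ht : 0 < t) :
    BddBelow {x | t ≤ cdf ν x} := by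
  obtain ⟨y, hy⟩ := ((tendsto_cdf_atBot ν).eventually (eventually_lt_nhds ht)).exists
  refine ⟨y, fun x hx => le_of_not_gt fun hxy => ?_⟩
  exact (hx.trans (monotone_cdf ν hxy.le)).not_gt hy

lemma le_cdf_sInf_setOf_le_cdf (ν : Measure ℝ) {t : ℝ} (ht₀ : 0 < t) (ht₁ : t < 1) :
    t ≤ cdf ν (sInf {x | t ≤ cdf ν x}) := by
  set a := sInf {x | t ≤ cdf ν x}
  have h_right : Tendsto (cdf ν) (𝓝[>] a) (𝓝 (cdf ν a)) :=
    ((cdf ν).right_continuous a).mono_left (nhdsWithin_mono a Ioi_subset_Ici_self)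
  refine ge_of_tendsto h_right ?_
  filter_upwards [self_mem_nhdsWithin] with z hz
  obtain ⟨y, hy, hyz⟩ :=
    (csInf_lt_iff (bddBelow_setOf_le_cdf ν ht₀) (nonempty_setOf_le_cdf ν ht₁)).mp hz
  exact hy.trans (monotone_cdf ν hyz.le)

variable {ν : Measure ℝ} [IsProbabilityMeasure ν]

lemma QF_eq_sInf_setOf_le_cdf (t : ℝ) : QF ν t = sInf {x | t ≤ cdf ν x} := by
  simp only [QF, cdf_eq_real, measureReal_def]

lemma QF_le_iff_le_cdf {t : ℝ} (ht₀ : 0 < t) (ht₁ : t < 1) (x : ℝ) :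
    QF ν t ≤ x ↔ t ≤ cdf ν x := by
  rw [QF_eq_sInf_setOf_le_cdf]
  exact ⟨fun h => (le_cdf_sInf_setOf_le_cdf ν ht₀ ht₁).trans (monotone_cdf ν h),
    fun h => csInf_le (bddBelow_setOf_le_cdf ν ht₀) h⟩

lemma monotoneOn_QF : MonotoneOn (QF ν) (Ioo 0 1) := fun s hs t ht hst => by
  simp only [QF_eq_sInf_setOf_le_cdf]
  exact csInf_le_csInf (bddBelow_setOf_le_cdf ν hs.1) (nonempty_setOf_le_cdf ν ht.2)
    fun x hx => hst.trans hx

lemma aemeasurable_QF : AEMeasurable (QF ν) (volume.restrict (Ioo 0 1)) :=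
  aemeasurable_restrict_of_monotoneOn measurableSet_Ioo monotoneOn_QF

lemma volume_Iic_inter_Ioo_zero_one {a : ℝ} (ha : a ≤ 1) :
    volume (Iic a ∩ Ioo 0 1) = volume (Ioc 0 a) := by
  rw [measure_congr ((ae_eq_refl (Iic a)).inter Ioo_ae_eq_Ioc), Iic_inter_Ioc_of_le ha]

lemma map_QF_volume_Ioo : (volume.restrict (Ioo 0 1)).map (QF ν) = ν := by
  refine Measure.ext_of_Iic _ ν fun x => ?_
  have h_preimage : QF ν ⁻¹' Iic x ∩ Ioo 0 1 = Iic (cdf ν x) ∩ Ioo 0 1 := by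
    ext t
    simp only [mem_inter_iff, mem_preimage, mem_Iic, mem_Ioo, and_congr_left_iff]
    exact fun ht => QF_le_iff_le_cdf ht.1 ht.2 x
  rw [Measure.map_apply_of_aemeasurable aemeasurable_QF measurableSet_Iic,
    Measure.restrict_apply' measurableSet_Ioo, h_preimage,
    volume_Iic_inter_Ioo_zero_one (cdf_le_one ν x), Real.volume_Ioc, sub_zero, ofReal_cdf]

lemma integral_comp_QF {f : ℝ → ℝ} (hf : AEStronglyMeasurable f ν) :
    ∫ x, f x ∂ν = ∫ t in Ioo 0 1, f (QF ν t) := by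
  rw [← map_QF_volume_Ioo (ν := ν)] at hf
  calc ∫ x, f x ∂ν = ∫ x, f x ∂(volume.restrict (Ioo 0 1)).map (QF ν) := by
        rw [map_QF_volume_Ioo]
    _ = ∫ t in Ioo 0 1, f (QF ν t) := integral_map aemeasurable_QF hf

lemma integrableOn_QF (hmom : Integrable (fun x : ℝ => x) ν) :
    IntegrableOn (QF ν) (Ioo 0 1) := by
  rw [← map_QF_volume_Ioo (ν := ν)] at hmom
  exact (integrable_map_measure aemeasurable_id.aestronglyMeasurable aemeasurable_QF).mp hmom

end Quantile

theorem quantile_tail_identity (ν : Measure ℝ) (hν : IsProbabilityMeasure ν)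
    (hmom : Integrable (fun x : ℝ => x) ν)
    (τ : ℝ) (hτ : τ ∈ Set.Ioo (0 : ℝ) 1) :
    ∫ g, max (g - QF ν (1 - τ)) 0 ∂ν =
      (∫ t in (1 - τ)..1, QF ν t) - τ * QF ν (1 - τ) := by
  have h_level : 1 - τ ∈ Ioo (0 : ℝ) 1 := ⟨by linarith [hτ.2], by linarith [hτ.1]⟩
  rw [integral_comp_QF (by fun_prop),
    setIntegral_max_sub_zero_of_monotoneOn monotoneOn_QF (integrableOn_QF hmom) h_level,
    sub_sub_cancel]
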